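/- Explicit solution of the matrix ODE Ü = 2a U̇ + b U + c U̇ U⁻¹ U̇ in the special case c = 1, a ≠ 0: let a, b be complex scalars with a ≠ 0, let M₀ be an invertible k×k complex matrix and N an arbitrary k×k complex matrix, and define M(t) = exp{ (b/(2a)) · ( −t + e^{a t} a⁻¹ sinh(a t) ) } · exp{ e^{a t} a⁻¹ sinh(a t) · N } · M₀. Then M(t) is invertible for every real t, M(0) = M₀, Ṁ(0) = N M₀, and M satisfies the matrix ODE M̈(t) = 2a Ṁ(t) + b M(t) + Ṁ(t) M(t)⁻¹ Ṁ(t) for all t. -/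

import Mathlib

/-!
With `φ(t) = e^{at} a⁻¹ sinh(at) = (e^{2at} - 1) / (2a)` one has `φ' = 1 + 2aφ`.
Differentiating the two factors gives `M' = G M` with `G = bφ • 1 + φ' • N`, and `φ' = 1 + 2aφ`
yields `G' = 2a G + b`. Hence `M'' = G' M + G M' = 2a M' + b M + G² M`, and `G² M = M' M⁻¹ M'`.
-/

open Matrix

section LinftyOp

attribute [local instance] Matrix.linftyOpNormedRing Matrix.linftyOpNormedAlgebra

/- Mathlib differentiates `exp` only in normed algebras, so we use the operator norm here; a
slope involves only the topology, which this norm shares with the entrywise sup norm. -/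
theorem Matrix.tendsto_slope_exp_smul {𝕂 n : Type*} [RCLike 𝕂] [Fintype n] [DecidableEq n]
    (N : Matrix n n 𝕂) (z : 𝕂) :
    Filter.Tendsto (slope (fun u : 𝕂 => NormedSpace.exp (u • N)) z) (nhdsWithin z {z}ᶜ)
      (nhds (N * NormedSpace.exp (z • N))) :=
  hasDerivAt_iff_tendsto_slope.mp (hasDerivAt_exp_smul_const' N z)

end LinftyOp

attribute [local instance] Matrix.normedAddCommGroup Matrix.normedSpace

theorem Matrix.hasDerivAt_exp_smul {𝕂 n : Type*} [RCLike 𝕂] [Fintype n] [DecidableEq n]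
    (N : Matrix n n 𝕂) (z : 𝕂) :
    HasDerivAt (fun u : 𝕂 => NormedSpace.exp (u • N)) (N * NormedSpace.exp (z • N)) z :=
  hasDerivAt_iff_tendsto_slope.mpr (Matrix.tendsto_slope_exp_smul N z)

theorem Matrix.hasDerivAt_mul {𝕜 𝔸 l m n : Type*} [NontriviallyNormedField 𝕜] [NormedRing 𝔸]
    [NormedAlgebra 𝕜 𝔸] [Fintype l] [Fintype m] [Fintype n]
    {A : 𝕜 → Matrix l m 𝔸} {B : 𝕜 → Matrix m n 𝔸} {A' : Matrix l m 𝔸} {B' : Matrix m n 𝔸}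
    {x : 𝕜} (hA : HasDerivAt A A' x) (hB : HasDerivAt B B' x) :
    HasDerivAt (fun y => A y * B y) (A' * B x + A x * B') x := by
  refine hasDerivAt_pi.mpr fun i => hasDerivAt_pi.mpr fun j => ?_
  have hA_entry (k : m) : HasDerivAt (fun y => A y i k) (A' i k) x :=
    hasDerivAt_pi.mp (hasDerivAt_pi.mp hA i) k
  have hB_entry (k : m) : HasDerivAt (fun y => B y k j) (B' k j) x :=
    hasDerivAt_pi.mp (hasDerivAt_pi.mp hB k) j
  simp only [mul_apply, add_apply, ← Finset.sum_add_distrib]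
  exact HasDerivAt.fun_sum fun k _ => (hA_entry k).mul (hB_entry k)

theorem Matrix.hasDerivAt_deriv_of_hasDerivAt_eq_mul {𝕜 R n : Type*} [NontriviallyNormedField 𝕜]
    [NormedCommRing R] [NormedAlgebra 𝕜 R] [Fintype n] [DecidableEq n] {α β : R}
    {G M : 𝕜 → Matrix n n R} {x : 𝕜} (hM : ∀ y, HasDerivAt M (G y * M y) y)
    (hG : HasDerivAt G (α • G x + β • 1) x) (hMx : IsUnit (M x)) :
    HasDerivAt (deriv M) (α • deriv M x + β • M x + deriv M x * (M x)⁻¹ * deriv M x) x := by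
  have hderiv : deriv M = fun y => G y * M y := funext fun y => (hM y).deriv
  have hcancel : M x * (M x)⁻¹ = 1 := mul_nonsing_inv _ ((isUnit_iff_isUnit_det _).mp hMx)
  rw [hderiv]
  convert Matrix.hasDerivAt_mul hG (hM x) using 1
  simp only [mul_assoc (G x), hcancel, mul_one, add_mul, smul_mul_assoc, one_mul]

theorem Matrix.hasDerivAt_smul_exp_smul_mul {𝕂 n : Type*} [RCLike 𝕂] [Fintype n] [DecidableEq n]
    {c φ : ℝ → 𝕂} {γ φ' : 𝕂} {t : ℝ} (N M₀ : Matrix n n 𝕂) (hc : HasDerivAt c (c t * γ) t)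
    (hφ : HasDerivAt φ φ' t) :
    HasDerivAt (fun s => c s • (NormedSpace.exp (φ s • N) * M₀))
      ((γ • 1 + φ' • N) * (c t • (NormedSpace.exp (φ t • N) * M₀))) t := by
  have hE : HasDerivAt (fun s => NormedSpace.exp (φ s • N))
      (φ' • (N * NormedSpace.exp (φ t • N))) t :=
    (Matrix.hasDerivAt_exp_smul N (φ t)).scomp t hφ
  refine (hc.fun_smul (Matrix.hasDerivAt_mul hE (hasDerivAt_const t M₀))).congr_deriv ?_
  simp only [add_mul, smul_mul_assoc, mul_smul_comm, one_mul, mul_zero, add_zero, mul_assoc]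
  module

theorem Complex.exp_mul_inv_mul_sinh {a : ℂ} (ha : a ≠ 0) (z : ℂ) :
    exp (a * z) * a⁻¹ * sinh (a * z) = (exp (2 * a * z) - 1) / (2 * a) := by
  rw [sinh, mul_assoc 2, two_mul, exp_add, exp_neg]
  field_simp

theorem Complex.hasDerivAt_exp_mul_ofReal (w : ℂ) (t : ℝ) :
    HasDerivAt (fun s : ℝ => exp (w * s)) (w * exp (w * t)) t := by
  simpa [mul_comm] using ((hasDerivAt_id (t : ℂ)).const_mul w).cexp.comp_ofReal

theorem Complex.hasDerivAt_exp_mul_inv_mul_sinh {a : ℂ} (ha : a ≠ 0) (t : ℝ) :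
    HasDerivAt (fun s : ℝ => exp (a * s) * a⁻¹ * sinh (a * s))
      (1 + 2 * a * (exp (a * t) * a⁻¹ * sinh (a * t))) t := by
  simp only [exp_mul_inv_mul_sinh ha]
  refine (((hasDerivAt_exp_mul_ofReal (2 * a) t).sub_const 1).div_const (2 * a)).congr_deriv ?_
  field_simp
  ring

theorem solution_matrix_ODE_c_eq_one (k : ℕ) (a b : ℂ) (ha : a ≠ 0)
    (M₀ N : Matrix (Fin k) (Fin k) ℂ) (hM₀ : IsUnit M₀)
    (φ : ℝ → ℂ)
    (hφ : ∀ t : ℝ, φ t = Complex.exp (a * t) * a⁻¹ * Complex.sinh (a * t))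
    (M : ℝ → Matrix (Fin k) (Fin k) ℂ)
    (hM : ∀ t : ℝ, M t =
      Complex.exp (b / (2 * a) * (-(t : ℂ) + φ t)) •
        (NormedSpace.exp (φ t • N) * M₀)) :
    (∀ t : ℝ, IsUnit (M t)) ∧
    M 0 = M₀ ∧
    (∀ t : ℝ, DifferentiableAt ℝ M t) ∧
    deriv M 0 = N * M₀ ∧
    ∀ t : ℝ, HasDerivAt (deriv M)
      ((2 * a) • deriv M t + b • M t + deriv M t * (M t)⁻¹ * deriv M t) t := by
  have hφ' (t : ℝ) : HasDerivAt φ (1 + 2 * a * φ t) t := by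
    simpa only [← hφ] using Complex.hasDerivAt_exp_mul_inv_mul_sinh ha t
  set G : ℝ → Matrix (Fin k) (Fin k) ℂ := fun s => (b * φ s) • 1 + (1 + 2 * a * φ s) • N
  have hM' (t : ℝ) : HasDerivAt M (G t * M t) t := by
    have hexponent : HasDerivAt (fun s : ℝ => b / (2 * a) * (-(s : ℂ) + φ s)) (b * φ t) t := by
      refine (((hasDerivAt_id t).ofReal_comp.neg.add (hφ' t)).const_mul _).congr_deriv ?_
      rw [Complex.ofReal_one]
      field_simp
      ring
    rw [funext hM]
    exact Matrix.hasDerivAt_smul_exp_smul_mul N M₀ hexponent.cexp (hφ' t)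
  have hG' (t : ℝ) : HasDerivAt G ((2 * a) • G t + b • 1) t := by
    refine ((((hφ' t).const_mul b).smul_const 1).add
      ((((hφ' t).const_mul (2 * a)).const_add 1).smul_const N)).congr_deriv ?_
    module
  have hunit (t : ℝ) : IsUnit (M t) := by
    rw [hM t]
    exact ((Matrix.isUnit_exp _).mul hM₀).smul (Units.mk0 _ (Complex.exp_ne_zero _))
  have hM0 : M 0 = M₀ := by simp [hM, hφ]
  refine ⟨hunit, hM0, fun t => (hM' t).differentiableAt, ?_,
    fun t => Matrix.hasDerivAt_deriv_of_hasDerivAt_eq_mul hM' (hG' t) (hunit t)⟩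
  refine (hM' 0).deriv.trans ?_
  simp [G, hM0, hφ]
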